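/- Let j ≥ 0. For n ≥ 0 let a_n denote the number of Deutsch paths of length n from height 0 to height j all of whose heights h_i satisfy h_i ≥ 0 (no upper bound). Then in the formal power series ring ℤ[[v]], the series S = Σ_{n≥0} a_n · vⁿ · ((1+v+v²)⁻¹)ⁿ satisfies S · (1+v)^{j+1} = (1+v+v²) · v^{j}. -/

import Mathlib

/-!
Let `a_j(t)` count nonnegative Deutsch paths ending at height `j` and `g_j(t)` those ending
strictly above `j`. Removing the last step gives `a_0 = 1 + t g_0`, `a_{k+1} = t (a_k + g_{k+1})`
and `g_j = a_{j+1} + g_{j+1}`. After substituting `t = v / (1 + v + v²)`, the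
series `(1 + v + v²) v^j / (1 + v)^{j+1}` and `(1 + v + v²) v^{j+1} / (1 + v)^{j+1}` solve the
same system, and the system has only one solution with `v^{j+1} ∣ g_j`: the differences of two
solutions vanish modulo `v^N` by induction on `N`.
-/

open PowerSeries Finset

/-- The power series `1 + v + v²` over `ℤ`. -/
noncomputable def q : PowerSeries ℤ := 1 + X + X ^ 2

/-- `v · (1+v+v²)⁻¹` as a formal power series over `ℤ`. -/
noncomputable def w : PowerSeries ℤ := X * PowerSeries.invOfUnit q 1

/-- `p` is a Deutsch path of length `n`: each step is either an up-step `+1`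
or a down-step of arbitrary (negative) size. -/
def IsDeutschPath (n : ℕ) (p : Fin (n + 1) → ℤ) : Prop :=
  ∀ i : Fin n, p i.succ - p i.castSucc = 1 ∨ p i.succ - p i.castSucc ≤ -1

/-- Number of Deutsch paths of length `n` from height `a` to height `b`
all of whose heights satisfy the predicate `P`. -/
noncomputable def pathCount (n : ℕ) (a b : ℤ) (P : ℤ → Prop) : ℕ :=
  Nat.card {p : Fin (n + 1) → ℤ //
    p 0 = a ∧ p (Fin.last n) = b ∧ (∀ i, P (p i)) ∧ IsDeutschPath n p}

/-- The power series `Σ_{n≥0} a_n · vⁿ · ((1+v+v²)⁻¹)ⁿ`.  Since the `n`-th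
summand has order `≥ n`, its coefficient of `v^N` is the (finite) sum of the
corresponding coefficients of the summands with `n ≤ N`. -/
noncomputable def series (a : ℕ → ℕ) : PowerSeries ℤ :=
  PowerSeries.mk fun N => ∑ n ∈ range (N + 1), (a n : ℤ) * coeff N (w ^ n)

theorem IsDeutschPath.le_add_val {n : ℕ} {p : Fin (n + 1) → ℤ} (hp : IsDeutschPath n p)
    (i : Fin (n + 1)) : p i ≤ p 0 + i := by
  induction i using Fin.induction with
  | zero => simp
  | succ k ih =>
    have := hp k
    simp only [Fin.val_castSucc, Fin.val_succ] at ih ⊢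
    push_cast
    omega

def lastStepHeights (n j : ℕ) : Finset ℕ := {h ∈ range (n + 1) | h + 1 = j ∨ j < h}

abbrev NonnegPath (n j : ℕ) : Type :=
  {p : Fin (n + 1) → ℤ //
    p 0 = 0 ∧ p (Fin.last n) = j ∧ (∀ i, 0 ≤ p i) ∧ IsDeutschPath n p}

namespace NonnegPath

theorem le_val {n j : ℕ} (p : NonnegPath n j) (i : Fin (n + 1)) : p.1 i ≤ i := by
  simpa [p.2.1] using p.2.2.2.2.le_add_val i

instance (n j : ℕ) : Finite (NonnegPath n j) := by
  have : {p : Fin (n + 1) → ℤ | p 0 = 0 ∧ p (Fin.last n) = j ∧ (∀ i, 0 ≤ p i) ∧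
      IsDeutschPath n p}.Finite := by
    refine (Set.Finite.pi' fun _ => Set.finite_Icc (0 : ℤ) n).subset ?_
    intro p hp i
    exact ⟨hp.2.2.1 i, (le_val ⟨p, hp⟩ i).trans (by exact_mod_cast i.is_le)⟩
  exact this.to_subtype

theorem isEmpty_of_lt {n j : ℕ} (h : n < j) : IsEmpty (NonnegPath n j) := by
  refine ⟨fun p => ?_⟩
  have := p.le_val (Fin.last n)
  rw [p.2.2.1, Fin.val_last] at this
  omega

theorem toNat_mem_lastStepHeights {n j : ℕ} (p : NonnegPath (n + 1) j) :
    (p.1 (Fin.last n).castSucc).toNat ∈ lastStepHeights n j := by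
  have hstep := p.2.2.2.2 (Fin.last n)
  have hnn := p.2.2.2.1 (Fin.last n).castSucc
  have hle := p.le_val (Fin.last n).castSucc
  rw [Fin.succ_last, p.2.2.1] at hstep
  simp only [Fin.val_castSucc, Fin.val_last] at hle
  simp only [lastStepHeights, mem_filter, mem_range]
  omega

def lastStepEquiv (n j : ℕ) :
    NonnegPath (n + 1) j ≃ Σ h : lastStepHeights n j, NonnegPath n h where
  toFun p := ⟨⟨_, p.toNat_mem_lastStepHeights⟩, ⟨Fin.init p.1, p.2.1,
    (Int.toNat_of_nonneg (p.2.2.2.1 _)).symm,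
    fun i => p.2.2.2.1 _, fun i => by simpa [Fin.init] using p.2.2.2.2 i.castSucc⟩⟩
  invFun q := ⟨Fin.snoc q.2.1 j, by simpa using q.2.2.1, by simp,
    fun i => Fin.lastCases (by simp) (fun i => by simpa using q.2.2.2.2.1 i) i,
    fun i => Fin.lastCases (by
      have := (mem_filter.mp q.1.2).2
      rw [Fin.succ_last, Fin.snoc_last, Fin.snoc_castSucc, q.2.2.2.1]; omega) (fun i => by
      rw [Fin.succ_castSucc, Fin.snoc_castSucc, Fin.snoc_castSucc]; exact q.2.2.2.2.2 i) i⟩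
  left_inv p := Subtype.ext (by simp [← p.2.2.1])
  right_inv q :=
    Sigma.subtype_ext (Subtype.ext (by simp [q.2.2.2.1])) (Fin.init_snoc (α := fun _ => ℤ) _ _)

end NonnegPath

noncomputable def nonnegCount (j n : ℕ) : ℕ := Nat.card (NonnegPath n j)

theorem nonnegCount_eq_zero_of_lt {j n : ℕ} (h : n < j) : nonnegCount j n = 0 :=
  have := NonnegPath.isEmpty_of_lt h
  Nat.card_of_isEmpty

theorem nonnegCount_zero_zero : nonnegCount 0 0 = 1 := by
  refine Nat.card_eq_one_iff_exists.mpr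
    ⟨⟨0, rfl, rfl, fun _ => le_rfl, fun i => i.elim0⟩, ?_⟩
  rintro ⟨p, hp0, -⟩
  ext i
  simpa [Fin.fin_one_eq_zero i] using hp0

theorem nonnegCount_succ (j n : ℕ) :
    nonnegCount j (n + 1) = ∑ h ∈ lastStepHeights n j, nonnegCount h n := by
  rw [nonnegCount, Nat.card_congr (NonnegPath.lastStepEquiv n j), Nat.card_sigma]
  exact sum_coe_sort _ fun h => nonnegCount h n

noncomputable def tailCount (j n : ℕ) : ℕ := ∑ h ∈ range (n + 1) with j < h, nonnegCount h n

theorem sum_nonnegCount_eq_or_lt {k m : ℕ} (n : ℕ) (hkm : k ≤ m) :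
    ∑ h ∈ range (n + 1) with h = k ∨ m < h, nonnegCount h n =
      nonnegCount k n + tailCount m n := by
  rw [filter_or, sum_union (disjoint_filter.2 fun _ _ hk => by omega), filter_eq', tailCount]
  split_ifs with hk
  · rw [sum_singleton]
  · rw [sum_empty, nonnegCount_eq_zero_of_lt (by simpa using hk)]

theorem nonnegCount_zero_succ (n : ℕ) : nonnegCount 0 (n + 1) = tailCount 0 n := by
  rw [nonnegCount_succ, lastStepHeights, tailCount]
  exact sum_congr (filter_congr fun h _ => by omega) fun _ _ => rfl

theorem nonnegCount_succ_succ (k n : ℕ) :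
    nonnegCount (k + 1) (n + 1) = nonnegCount k n + tailCount (k + 1) n := by
  rw [nonnegCount_succ, lastStepHeights, ← sum_nonnegCount_eq_or_lt n k.le_succ]
  exact sum_congr (filter_congr fun h _ => by omega) fun _ _ => rfl

theorem tailCount_eq (j n : ℕ) : tailCount j n = nonnegCount (j + 1) n + tailCount (j + 1) n := by
  rw [← sum_nonnegCount_eq_or_lt n le_rfl, tailCount]
  exact sum_congr (filter_congr fun h _ => by omega) fun _ _ => rfl

theorem tailCount_eq_zero_of_le {j n : ℕ} (h : n ≤ j) : tailCount j n = 0 :=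
  sum_eq_zero fun i hi => by simp only [mem_filter, mem_range] at hi; omega

noncomputable def nonnegGF (j : ℕ) : ℤ⟦X⟧ := mk fun n => (nonnegCount j n : ℤ)

noncomputable def tailGF (j : ℕ) : ℤ⟦X⟧ := mk fun n => (tailCount j n : ℤ)

theorem nonnegGF_zero : nonnegGF 0 = 1 + X * tailGF 0 := by
  ext (_ | n)
  · simp [nonnegGF, nonnegCount_zero_zero]
  · simp [nonnegGF, tailGF, coeff_succ_X_mul, nonnegCount_zero_succ]

theorem nonnegGF_succ (k : ℕ) : nonnegGF (k + 1) = X * (nonnegGF k + tailGF (k + 1)) := by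
  ext (_ | n)
  · simp [nonnegGF, nonnegCount_eq_zero_of_lt]
  · simp [nonnegGF, tailGF, coeff_succ_X_mul, nonnegCount_succ_succ]

theorem tailGF_eq (j : ℕ) : tailGF j = nonnegGF (j + 1) + tailGF (j + 1) := by
  ext n
  simp [nonnegGF, tailGF, tailCount_eq j n]

theorem X_pow_dvd_tailGF (j : ℕ) : X ^ (j + 1) ∣ tailGF j :=
  X_pow_dvd_iff.mpr fun m hm => by simp [tailGF, tailCount_eq_zero_of_le (by omega : m ≤ j)]

namespace PowerSeries

variable {R : Type*} [CommRing R]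

theorem eq_zero_of_forall_X_pow_dvd {f : R⟦X⟧} (h : ∀ N, X ^ N ∣ f) : f = 0 := by
  ext N
  simpa using X_pow_dvd_iff.mp (h (N + 1)) N (Nat.lt_succ_self N)

theorem eq_zero_of_error_recurrence {t : R⟦X⟧} (ht : X ∣ t) {D H : ℕ → R⟦X⟧}
    (hD_zero : D 0 = t * H 0) (hD_succ : ∀ k, D (k + 1) = t * ((1 + X) * D k + H (k + 1)))
    (hH_step : ∀ j, H j * (1 + X) = H (j + 1) + D (j + 1)) (hH_dvd : ∀ j, X ^ (j + 1) ∣ H j)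
    (j : ℕ) : D j = 0 := by
  suffices h : ∀ N j, X ^ N ∣ D j ∧ X ^ N ∣ H j from
    eq_zero_of_forall_X_pow_dvd fun N => (h N j).1
  intro N
  induction N with
  | zero => simp
  | succ N ih =>
    have hD : ∀ j, X ^ (N + 1) ∣ D j := by
      rintro (_ | k)
      · rw [hD_zero, pow_succ']
        exact mul_dvd_mul ht (ih 0).2
      · rw [hD_succ, pow_succ']
        exact mul_dvd_mul ht (dvd_add (dvd_mul_of_dvd_right (ih k).1 _) (ih (k + 1)).2)
    -- descending induction on `j`, starting from `j ≥ N` where `hH_dvd` applies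
    have hH : ∀ m j, N ≤ j + m → X ^ (N + 1) ∣ H j := by
      intro m
      induction m with
      | zero => exact fun j hj => (pow_dvd_pow X (by omega)).trans (hH_dvd j)
      | succ m ihm =>
        intro j hj
        have hXH : X ^ (N + 1) ∣ X * H j := by
          rw [pow_succ']; exact mul_dvd_mul_left X (ih j).2
        have : H j = H (j + 1) + D (j + 1) - X * H j := by
          linear_combination hH_step j
        rw [this]
        exact dvd_sub (dvd_add (ihm (j + 1) (by omega)) (hD _)) hXH
    exact fun j => ⟨hD j, hH N j (by omega)⟩

theorem eq_of_recurrence {t : R⟦X⟧} (ht : t * (1 + X + X ^ 2) = X) {A G : ℕ → R⟦X⟧}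
    (hA_zero : A 0 = 1 + t * G 0) (hA_succ : ∀ k, A (k + 1) = t * (A k + G (k + 1)))
    (hG : ∀ j, G j = A (j + 1) + G (j + 1)) (hG_dvd : ∀ j, X ^ (j + 1) ∣ G j) (j : ℕ) :
    A j * (1 + X) ^ (j + 1) = (1 + X + X ^ 2) * X ^ j := by
  have hXt : X ∣ t := X_dvd_iff.mpr (by simpa using congrArg constantCoeff ht)
  rw [← sub_eq_zero]
  refine eq_zero_of_error_recurrence hXt
    (D := fun j => A j * (1 + X) ^ (j + 1) - (1 + X + X ^ 2) * X ^ j)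
    (H := fun j => G j * (1 + X) ^ (j + 1) - (1 + X + X ^ 2) * X ^ (j + 1)) ?_ ?_ ?_ ?_ j
  · simp only [hA_zero]; linear_combination X * ht
  · intro k; simp only [hA_succ]; linear_combination X ^ k * (1 + X + X ^ 2) * ht
  · intro j; simp only [hG j]; ring
  · intro j
    exact dvd_sub ((pow_dvd_pow X (by omega)).trans ((hG_dvd j).mul_right _)) (dvd_mul_left _ _)

end PowerSeries

theorem w_mul_q : w * q = X := by
  rw [w, mul_assoc, mul_comm _ q, mul_invOfUnit q 1 (by simp [q]), mul_one]

theorem X_dvd_w : X ∣ w := dvd_mul_right X _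

theorem hasSubst_w : HasSubst w := HasSubst.of_constantCoeff_zero' (X_dvd_iff.mp X_dvd_w)

theorem series_eq_subst (b : ℕ → ℕ) : series b = (mk fun n => (b n : ℤ)).subst w := by
  ext N
  rw [coeff_subst' hasSubst_w, series, coeff_mk,
    finsum_eq_sum_of_support_subset (s := range (N + 1)) _ fun d hd => ?_]
  · simp
  · by_contra hdN
    refine hd ?_
    have : X ^ d ∣ w ^ d := pow_dvd_pow_of_dvd X_dvd_w d
    simp [X_pow_dvd_iff.mp this N (by simpa using hdN)]

theorem stmt10 (j : ℕ) :
    (series fun n => pathCount n 0 j (fun x => 0 ≤ x)) * (1 + X) ^ (j + 1) =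
      q * X ^ j := by
  change series (nonnegCount j) * _ = _
  rw [series_eq_subst, ← coe_substAlgHom hasSubst_w]
  refine eq_of_recurrence w_mul_q (A := fun j => substAlgHom hasSubst_w (nonnegGF j))
    (G := fun j => substAlgHom hasSubst_w (tailGF j)) ?_ ?_ ?_ ?_ j
  · simp [nonnegGF_zero, substAlgHom_X]
  · simp [nonnegGF_succ, substAlgHom_X]
  · simp [← map_add, ← tailGF_eq]
  · intro j
    exact (pow_dvd_pow_of_dvd X_dvd_w _).trans
      (by simpa [substAlgHom_X] using map_dvd (substAlgHom hasSubst_w) (X_pow_dvd_tailGF j))
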